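/- arXiv:0712.1686 — 3 statements merged into one kernel-verified Lean document; each statement's English description precedes it below -/
import Mathlib

section
/- Let c > 0 and α ∈ [0,2], and let f : {0,1}ⁿ → ℝ satisfy condition (3.1) with the function ϕ(u) = c·max(u,0)^α and constant B. Then there exist constants C > 0 and t₀ > 0, depending only on c, α, B and the median of f(X), such that for all t ≥ t₀: if 0 ≤ α < 2 then P{f(X) ≥ t} ≤ C·exp(−t^{2−α}/C), and if α = 2 then P{f(X) ≥ t} ≤ C·exp(−(log t)²/C). -/
open scoped Classical
open Finset

/-- Probability of an event under the uniform distribution on `{0,1}ⁿ`. -/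
noncomputable def prb {n : ℕ} (P : (Fin n → Fin 2) → Prop) : ℝ :=
  ((Finset.univ.filter P).card : ℝ) / 2 ^ n

/-- `x^{(i)}`: flip the `i`-th bit of `x`. -/
noncomputable def flipBit {n : ℕ} (x : Fin n → Fin 2) (i : Fin n) : Fin n → Fin 2 :=
  Function.update x i (x i + 1)

/-- The `α`-quantile `Q_α = inf { z : P{f(X) ≤ z} ≥ α }`. -/
noncomputable def quant {n : ℕ} (f : (Fin n → Fin 2) → ℝ) (α : ℝ) : ℝ :=
  sInf {z : ℝ | α ≤ prb fun x => f x ≤ z}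

/-- Expectation of `f(X)` for `X` uniform on `{0,1}ⁿ`. -/
noncomputable def expecb {n : ℕ} (f : (Fin n → Fin 2) → ℝ) : ℝ :=
  (∑ x, f x) / 2 ^ n

/-- Variance of `f(X)` for `X` uniform on `{0,1}ⁿ`. -/
noncomputable def varb {n : ℕ} (f : (Fin n → Fin 2) → ℝ) : ℝ :=
  expecb fun x => (f x - expecb f) ^ 2


/-!
A flip of one coordinate is a two-point space, on which the entropy of `h > 0` is at most
`¼ (log a - log b)(a - b)`. Tensorizing this along the conditional expectations given the first
`k` coordinates (the two-point bound is transported through the averaging by the joint convexity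
of `(a, b) ↦ (log a - log b)(a - b)`) gives the modified log-Sobolev inequality
`Ent h ≤ ¼ 𝔼 ∑ᵢ (log h - log h(x⁽ⁱ⁾))(h - h(x⁽ⁱ⁾))`. For `h = exp (l g)` with
`∑ᵢ (g x - g x⁽ⁱ⁾)₊² ≤ v` this reads `Ent e^{lg} ≤ l² v / 2 · 𝔼 e^{lg}`, and the Herbst argument
turns it into `𝔼 e^{lg} ≤ exp (l 𝔼 g + l² v / 2)`; applied to `min g a`, whose mean is at most
`(a + m) / 2` when `m` is a median, Chernoff's bound gives `P{g ≥ a} ≤ exp (-(a - m)² / (8 v))`.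

Condition (3.1) with `ϕ u = c u₊^α` does not bound the gradient of `f` uniformly, but it does
bound that of `g = ψ (max f (2B))` with `ψ u = u ^ ((2 - α) / 2)`, or `ψ = log` when `α = 2`:
above `2B` a flip moves `f` by at most half of its value, so `ψ' (f)² · c f^α ≤ 4c`. Applying
the tail bound to `g` at level `ψ t` gives the theorem.
-/

open Real Filter Topology
open scoped BigOperators

namespace BooleanCube

variable {n : ℕ}

/-! ### Conditioning on the first coordinates -/

lemma flipBit_flipBit (x : Fin n → Fin 2) (i : Fin n) : flipBit (flipBit x i) i = x := by
  funext j
  rcases eq_or_ne j i with rfl | hj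
  · simp only [flipBit, Function.update_self]
    fin_omega
  · simp [flipBit, Function.update_of_ne hj]

lemma expect_comp_flipBit (F : (Fin n → Fin 2) → ℝ) (i : Fin n) :
    𝔼 x, F (flipBit x i) = 𝔼 x, F x :=
  Fintype.expect_bijective _ (Function.Involutive.bijective fun x => flipBit_flipBit x i) _ _
    fun _ => rfl

lemma apply_update_add_apply_flipBit (F : (Fin n → Fin 2) → ℝ) (z : Fin n → Fin 2)
    (i : Fin n) (a : Fin 2) :
    F (Function.update z i a) + F (flipBit (Function.update z i a) i) =
      F z + F (flipBit z i) := by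
  have key : ∀ a : Fin 2, F (Function.update z i a) + F (Function.update z i (a + 1)) =
      F (Function.update z i 0) + F (Function.update z i 1) := by
    intro a
    fin_cases a
    · rfl
    · exact add_comm _ _
  have hz := key (z i)
  simp only [Function.update_eq_self] at hz
  simp only [flipBit, Function.update_idem, Function.update_self, key, hz]

def splice (k : ℕ) (x y : Fin n → Fin 2) : Fin n → Fin 2 :=
  fun i => if (i : ℕ) < k then x i else y i

lemma splice_zero (x y : Fin n → Fin 2) : splice 0 x y = y := by
  funext i
  simp [splice]

lemma splice_length (x y : Fin n → Fin 2) : splice n x y = x := by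
  funext i
  simp [splice]

lemma splice_eq_update_splice_succ {k : ℕ} {i : Fin n} (hi : (i : ℕ) = k)
    (x y : Fin n → Fin 2) :
    splice k x y = Function.update (splice (k + 1) x y) i (y i) := by
  funext j
  rcases eq_or_ne j i with rfl | hj
  · simp [splice, hi]
  · have : (j : ℕ) ≠ k := hi ▸ Fin.val_ne_of_ne hj
    simp only [splice, Function.update_of_ne hj]
    split_ifs <;> first | rfl | omega

lemma splice_flipBit_right {k : ℕ} {i : Fin n} (hi : k ≤ i) (x y : Fin n → Fin 2) :
    splice k x (flipBit y i) = flipBit (splice k x y) i := by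
  funext j
  rcases eq_or_ne j i with rfl | hj
  · simp [splice, flipBit, not_lt.mpr hi]
  · simp [splice, flipBit, Function.update_of_ne hj]

lemma splice_flipBit_left {k : ℕ} {i : Fin n} (hi : (i : ℕ) < k) (x y : Fin n → Fin 2) :
    splice k (flipBit x i) y = flipBit (splice k x y) i := by
  funext j
  rcases eq_or_ne j i with rfl | hj
  · simp [splice, flipBit, hi]
  · simp [splice, flipBit, Function.update_of_ne hj]

/-- The conditional expectation of `h` given the first `k` coordinates. -/
noncomputable def condAvg (k : ℕ) (h : (Fin n → Fin 2) → ℝ) (x : Fin n → Fin 2) : ℝ :=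
  𝔼 y, h (splice k x y)

lemma condAvg_zero (h : (Fin n → Fin 2) → ℝ) (x : Fin n → Fin 2) :
    condAvg 0 h x = 𝔼 y, h y := by
  simp [condAvg, splice_zero]

lemma condAvg_length (h : (Fin n → Fin 2) → ℝ) : condAvg n h = h := by
  funext x
  simp [condAvg, splice_length]

lemma expect_condAvg (k : ℕ) (h : (Fin n → Fin 2) → ℝ) :
    𝔼 x, condAvg k h x = 𝔼 x, h x := by
  have swap : Function.Involutive
      fun p : (Fin n → Fin 2) × (Fin n → Fin 2) => (splice k p.1 p.2, splice k p.2 p.1) := by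
    intro p
    ext i <;> by_cases hi : (i : ℕ) < k <;> simp [splice, hi]
  calc 𝔼 x, condAvg k h x = 𝔼 p : (Fin n → Fin 2) × (Fin n → Fin 2), h (splice k p.1 p.2) := by
        rw [← Finset.univ_product_univ,
          Finset.expect_product' (f := fun x y => h (splice k x y))]
        rfl
    _ = 𝔼 p : (Fin n → Fin 2) × (Fin n → Fin 2), h p.1 :=
        Fintype.expect_bijective _ swap.bijective _ _ fun _ => rfl
    _ = 𝔼 x, h x := by
        rw [← Finset.univ_product_univ, Finset.expect_product' (f := fun x _ => h x)]
        simp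

lemma condAvg_flipBit {k : ℕ} {i : Fin n} (hi : (i : ℕ) < k) (h : (Fin n → Fin 2) → ℝ)
    (x : Fin n → Fin 2) :
    condAvg k h (flipBit x i) = 𝔼 y, h (flipBit (splice k x y) i) := by
  simp only [condAvg, splice_flipBit_left hi]

lemma condAvg_eq_avg_flipBit {k : ℕ} {i : Fin n} (hi : (i : ℕ) = k)
    (h : (Fin n → Fin 2) → ℝ) (x : Fin n → Fin 2) :
    condAvg k h x = (condAvg (k + 1) h x + condAvg (k + 1) h (flipBit x i)) / 2 := by
  have pair : ∀ y, h (splice k x y) + h (splice k x (flipBit y i)) =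
      h (splice (k + 1) x y) + h (flipBit (splice (k + 1) x y) i) := by
    intro y
    rw [splice_flipBit_right hi.ge, splice_eq_update_splice_succ hi,
      apply_update_add_apply_flipBit]
  have := expect_comp_flipBit (fun y => h (splice k x y)) i
  rw [condAvg_flipBit (by omega), condAvg, condAvg, ← Finset.expect_add_distrib]
  simp only [← pair, Finset.expect_add_distrib, this]
  ring

/-! ### The logarithmic Sobolev inequality -/

lemma two_point_entropy_le {a b : ℝ} (ha : 0 < a) (hb : 0 < b) :
    (a * log a + b * log b) / 2 - (a + b) / 2 * log ((a + b) / 2) ≤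
      (log a - log b) * (a - b) / 4 := by
  have hmid : (log a + log b) / 2 ≤ log ((a + b) / 2) := by
    have := strictConcaveOn_log_Ioi.concaveOn.2 ha hb (by norm_num : (0 : ℝ) ≤ 1 / 2)
      (by norm_num : (0 : ℝ) ≤ 1 / 2) (by norm_num)
    simp only [smul_eq_mul] at this
    calc (log a + log b) / 2 = 1 / 2 * log a + 1 / 2 * log b := by ring
      _ ≤ log (1 / 2 * a + 1 / 2 * b) := this
      _ = log ((a + b) / 2) := by ring_nf
  nlinarith [mul_le_mul_of_nonneg_left hmid (by positivity : (0 : ℝ) ≤ (a + b) / 2)]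

/-- The log-sum inequality, for averages. -/
lemma expect_mul_log_sub_log_le {ι : Type*} [Fintype ι] [Nonempty ι] {u v : ι → ℝ}
    (hu : ∀ i, 0 < u i) (hv : ∀ i, 0 < v i) :
    (𝔼 i, u i) * (log (𝔼 i, u i) - log (𝔼 i, v i)) ≤ 𝔼 i, u i * (log (u i) - log (v i)) := by
  set U := 𝔼 i, u i
  set V := 𝔼 i, v i
  have hU : 0 < U := Finset.expect_pos (fun i _ => hu i) Finset.univ_nonempty
  have hV : 0 < V := Finset.expect_pos (fun i _ => hv i) Finset.univ_nonempty
  -- `1 - 1/z ≤ log z` at `z = u i V / (v i U)`; the resulting lower bounds average to zero.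
  have pointwise : ∀ i, u i - v i * U / V ≤
      u i * (log (u i) - log (v i)) - u i * (log U - log V) := by
    intro i
    have hz : 0 < u i * V / (v i * U) := by have := hu i; have := hv i; positivity
    have hlog := Real.one_sub_inv_le_log_of_pos hz
    rw [Real.log_div (by have := hu i; positivity) (by have := hv i; positivity),
      Real.log_mul (hu i).ne' hV.ne', Real.log_mul (hv i).ne' hU.ne', inv_div] at hlog
    have := mul_le_mul_of_nonneg_left hlog (hu i).le
    have e : u i * (1 - v i * U / (u i * V)) = u i - v i * U / V := by
      field_simp [(hu i).ne']
    rw [e] at this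
    linarith
  have hzero : 𝔼 i, (u i - v i * U / V) = 0 := by
    rw [Finset.expect_sub_distrib, ← Finset.expect_div, ← Finset.expect_mul]
    field_simp
    ring
  have := Finset.expect_le_expect (s := Finset.univ) fun i _ => pointwise i
  rw [hzero, Finset.expect_sub_distrib, ← Finset.expect_mul] at this
  linarith

lemma log_sub_log_mul_sub_le_expect {ι : Type*} [Fintype ι] [Nonempty ι] {u v : ι → ℝ}
    (hu : ∀ i, 0 < u i) (hv : ∀ i, 0 < v i) :
    (log (𝔼 i, u i) - log (𝔼 i, v i)) * ((𝔼 i, u i) - 𝔼 i, v i) ≤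
      𝔼 i, (log (u i) - log (v i)) * (u i - v i) := by
  have huv := expect_mul_log_sub_log_le hu hv
  have hvu := expect_mul_log_sub_log_le hv hu
  have split : 𝔼 i, (log (u i) - log (v i)) * (u i - v i) =
      (𝔼 i, u i * (log (u i) - log (v i))) + 𝔼 i, v i * (log (v i) - log (u i)) := by
    rw [← Finset.expect_add_distrib]
    exact Finset.expect_congr rfl fun i _ => by ring
  rw [split]
  linarith

noncomputable def entropy (h : (Fin n → Fin 2) → ℝ) : ℝ :=
  𝔼 x, h x * log (h x) - (𝔼 x, h x) * log (𝔼 x, h x)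

lemma expect_condAvg_mul_log_succ_sub_le (h : (Fin n → Fin 2) → ℝ) (hpos : ∀ x, 0 < h x)
    (i : Fin n) :
    𝔼 x, condAvg (i + 1) h x * log (condAvg (i + 1) h x) -
        𝔼 x, condAvg i h x * log (condAvg i h x) ≤
      (𝔼 x, (log (h x) - log (h (flipBit x i))) * (h x - h (flipBit x i))) / 4 := by
  set p := condAvg (i + 1) h
  set D : (Fin n → Fin 2) → ℝ :=
    fun z => (log (h z) - log (h (flipBit z i))) * (h z - h (flipBit z i))
  have hp : ∀ x, 0 < p x := fun x => Finset.expect_pos (fun y _ => hpos _) Finset.univ_nonempty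
  have hmid : ∀ x, condAvg i h x = (p x + p (flipBit x i)) / 2 :=
    condAvg_eq_avg_flipBit rfl h
  have hconvex : ∀ x, (log (p x) - log (p (flipBit x i))) * (p x - p (flipBit x i)) ≤
      condAvg (i + 1) D x := by
    intro x
    rw [show p (flipBit x i) = _ from condAvg_flipBit (Nat.lt_succ_self _) h x]
    exact log_sub_log_mul_sub_le_expect (fun _ => hpos _) (fun _ => hpos _)
  have hsymm : 𝔼 x, p x * log (p x) =
      𝔼 x, (p x * log (p x) + p (flipBit x i) * log (p (flipBit x i))) / 2 := by
    rw [← Finset.expect_div, Finset.expect_add_distrib,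
      expect_comp_flipBit (fun x => p x * log (p x))]
    ring
  calc 𝔼 x, p x * log (p x) - 𝔼 x, condAvg i h x * log (condAvg i h x)
      = 𝔼 x, ((p x * log (p x) + p (flipBit x i) * log (p (flipBit x i))) / 2 -
          (p x + p (flipBit x i)) / 2 * log ((p x + p (flipBit x i)) / 2)) := by
        simp only [hsymm, hmid, Finset.expect_sub_distrib]
    _ ≤ 𝔼 x, condAvg (i + 1) D x / 4 := by
        refine Finset.expect_le_expect fun x _ => ?_
        linarith [two_point_entropy_le (hp x) (hp (flipBit x i)), hconvex x]
    _ = (𝔼 x, D x) / 4 := by rw [← Finset.expect_div, expect_condAvg]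

theorem entropy_le (h : (Fin n → Fin 2) → ℝ) (hpos : ∀ x, 0 < h x) :
    entropy h ≤
      (𝔼 x, ∑ i, (log (h x) - log (h (flipBit x i))) * (h x - h (flipBit x i))) / 4 := by
  set Φ : ℕ → ℝ := fun k => 𝔼 x, condAvg k h x * log (condAvg k h x)
  have htele : entropy h = ∑ i : Fin n, (Φ (i + 1) - Φ i) := by
    rw [Fin.sum_univ_eq_sum_range (fun k => Φ (k + 1) - Φ k), Finset.sum_range_sub]
    simp [Φ, entropy, condAvg_length, condAvg_zero]
  rw [htele, Finset.expect_sum_comm, Finset.sum_div]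
  exact Finset.sum_le_sum fun i _ => expect_condAvg_mul_log_succ_sub_le h hpos i

/-! ### The Herbst argument -/

lemma sub_mul_exp_sub_le {r s : ℝ} (h : r ≤ s) :
    (s - r) * (exp s - exp r) ≤ (s - r) ^ 2 * exp s := by
  have hexp : exp s - exp r ≤ (s - r) * exp s := by
    have h1 := add_one_le_exp (r - s)
    have h2 : exp r = exp (r - s) * exp s := by rw [← exp_add, sub_add_cancel]
    nlinarith [exp_pos s]
  nlinarith [mul_le_mul_of_nonneg_left hexp (sub_nonneg.2 h)]

lemma mul_sub_mul_mul_exp_sub_le {l : ℝ} (hl : 0 ≤ l) (a b : ℝ) :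
    (l * a - l * b) * (exp (l * a) - exp (l * b)) ≤
      l ^ 2 * max (a - b) 0 ^ 2 * exp (l * a) + l ^ 2 * max (b - a) 0 ^ 2 * exp (l * b) := by
  rcases le_total b a with hba | hab
  · have := sub_mul_exp_sub_le (mul_le_mul_of_nonneg_left hba hl)
    rw [max_eq_left (sub_nonneg.2 hba), max_eq_right (sub_nonpos.2 hba)]
    nlinarith [exp_pos (l * b)]
  · have := sub_mul_exp_sub_le (mul_le_mul_of_nonneg_left hab hl)
    rw [max_eq_right (sub_nonpos.2 hab), max_eq_left (sub_nonneg.2 hab)]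
    nlinarith [exp_pos (l * a)]

noncomputable def upperGrad (f : (Fin n → Fin 2) → ℝ) (x : Fin n → Fin 2) : ℝ :=
  ∑ i, max (f x - f (flipBit x i)) 0 ^ 2

lemma entropy_exp_le {g : (Fin n → Fin 2) → ℝ} {v : ℝ} (hg : ∀ x, upperGrad g x ≤ v)
    {l : ℝ} (hl : 0 ≤ l) :
    entropy (fun x => exp (l * g x)) ≤ l ^ 2 * v / 2 * 𝔼 x, exp (l * g x) := by
  set A : (Fin n → Fin 2) → Fin n → ℝ :=
    fun x i => l ^ 2 * max (g x - g (flipBit x i)) 0 ^ 2 * exp (l * g x)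
  have hpair : ∀ x i, (l * g x - l * g (flipBit x i)) *
      (exp (l * g x) - exp (l * g (flipBit x i))) ≤ A x i + A (flipBit x i) i := by
    intro x i
    simpa only [A, flipBit_flipBit] using mul_sub_mul_mul_exp_sub_le hl (g x) (g (flipBit x i))
  have hflip : 𝔼 x, ∑ i, A (flipBit x i) i = 𝔼 x, ∑ i, A x i := by
    simp only [Finset.expect_sum_comm]
    exact Finset.sum_congr rfl fun i _ => expect_comp_flipBit (A · i) i
  have hA : ∀ x, ∑ i, A x i ≤ l ^ 2 * v * exp (l * g x) := by
    intro x
    have : ∑ i, A x i = l ^ 2 * upperGrad g x * exp (l * g x) := by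
      simp only [A, upperGrad, Finset.mul_sum, Finset.sum_mul]
    rw [this]
    gcongr
    exact hg x
  refine (entropy_le _ fun _ => exp_pos _).trans ?_
  simp only [log_exp]
  calc (𝔼 x, ∑ i, (l * g x - l * g (flipBit x i)) *
          (exp (l * g x) - exp (l * g (flipBit x i)))) / 4
      ≤ (𝔼 x, ∑ i, (A x i + A (flipBit x i) i)) / 4 := by
        gcongr with x _ i
        exact hpair x i
    _ = (𝔼 x, ∑ i, A x i) / 2 := by
        simp only [Finset.sum_add_distrib, Finset.expect_add_distrib, hflip]
        ring
    _ ≤ (𝔼 x, l ^ 2 * v * exp (l * g x)) / 2 := by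
        gcongr with x
        exact hA x
    _ = l ^ 2 * v / 2 * 𝔼 x, exp (l * g x) := by
        rw [← Finset.mul_expect]
        ring

/-- The entropy bound says that `l ↦ log (G l) / l - v l / 2` is nonincreasing on `(0, ∞)`,
and its limit at `0⁺` is `G' 0 = m`. -/
lemma log_le_of_entropy_bound {G G' : ℝ → ℝ} {m v : ℝ} (hderiv : ∀ l, HasDerivAt G (G' l) l)
    (hpos : ∀ l, 0 < G l) (hG0 : G 0 = 1) (hG'0 : G' 0 = m)
    (hent : ∀ l, 0 < l → l * G' l - G l * log (G l) ≤ l ^ 2 * v / 2 * G l)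
    {l : ℝ} (hl : 0 ≤ l) : log (G l) ≤ l * m + l ^ 2 * v / 2 := by
  set K : ℝ → ℝ := fun l => log (G l)
  have hK : ∀ l, HasDerivAt K (G' l / G l) l := fun l => (hderiv l).log (hpos l).ne'
  set r : ℝ → ℝ := fun l => K l / l - v / 2 * l
  have hr : ∀ l, 0 < l → HasDerivAt r ((G' l / G l * l - K l * 1) / l ^ 2 - v / 2 * 1) l :=
    fun l hl => ((hK l).div (hasDerivAt_id l) hl.ne').sub ((hasDerivAt_id l).const_mul _)
  have hanti : AntitoneOn r (Set.Ioi 0) := by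
    refine antitoneOn_of_deriv_nonpos (convex_Ioi 0)
      (fun l hl => (hr l hl).continuousAt.continuousWithinAt) (fun l hl => ?_) fun l hl => ?_
    · rw [interior_Ioi] at hl
      exact (hr l hl).differentiableAt.differentiableWithinAt
    · rw [interior_Ioi] at hl
      have hGl := hpos l
      have hl' : (0 : ℝ) < l := hl
      rw [(hr l hl).deriv, sub_nonpos, div_le_iff₀ (by positivity)]
      have := hent l hl
      rw [div_mul_eq_mul_div, div_sub' hGl.ne', div_le_iff₀ hGl]
      nlinarith
  have hlim : Tendsto r (𝓝[>] 0) (𝓝 m) := by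
    have hslope : Tendsto (slope K 0) (𝓝[>] 0) (𝓝 m) := by
      have := (hasDerivAt_iff_tendsto_slope.mp (hK 0)).mono_left
        (nhdsWithin_mono 0 fun x (hx : 0 < x) => hx.ne')
      rwa [hG'0, hG0, div_one] at this
    have hlin : Tendsto (fun a : ℝ => v / 2 * a) (𝓝[>] 0) (𝓝 0) :=
      ((continuous_const_mul (v / 2)).tendsto' 0 0 (mul_zero _)).mono_left nhdsWithin_le_nhds
    have := hslope.sub hlin
    rw [sub_zero] at this
    refine this.congr' ?_
    filter_upwards with a
    simp [r, K, slope_def_field, hG0]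
  rcases hl.eq_or_lt with rfl | hl
  · simp [hG0]
  · have hrl : r l ≤ m := ge_of_tendsto hlim <| by
      filter_upwards [Ioo_mem_nhdsGT hl] with a ha using hanti ha.1 hl ha.2.le
    have := mul_le_mul_of_nonneg_left hrl hl.le
    simp only [r, mul_sub, mul_div_cancel₀ _ hl.ne'] at this
    nlinarith

lemma hasDerivAt_expect_exp_mul (g : (Fin n → Fin 2) → ℝ) (l : ℝ) :
    HasDerivAt (fun l => 𝔼 x, exp (l * g x)) (𝔼 x, g x * exp (l * g x)) l := by
  simp only [Fintype.expect_eq_sum_div_card]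
  refine (HasDerivAt.fun_sum fun x _ => ?_).div_const _
  simpa [mul_comm] using ((hasDerivAt_id l).mul_const (g x)).exp

theorem expect_exp_mul_le {g : (Fin n → Fin 2) → ℝ} {v : ℝ} (hg : ∀ x, upperGrad g x ≤ v)
    {l : ℝ} (hl : 0 ≤ l) :
    𝔼 x, exp (l * g x) ≤ exp (l * (𝔼 x, g x) + l ^ 2 * v / 2) := by
  have hpos : ∀ l, 0 < 𝔼 x, exp (l * g x) :=
    fun l => Finset.expect_pos (fun _ _ => exp_pos _) Finset.univ_nonempty
  rw [← exp_log (hpos l), exp_le_exp]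
  refine log_le_of_entropy_bound (hasDerivAt_expect_exp_mul g) hpos (by simp) (by simp)
    (fun l hl => ?_) hl
  have hmul : 𝔼 x, exp (l * g x) * (l * g x) = l * 𝔼 x, g x * exp (l * g x) := by
    rw [Finset.mul_expect]
    exact Finset.expect_congr rfl fun x _ => by ring
  simpa only [entropy, log_exp, hmul] using entropy_exp_le hg hl.le

/-! ### Tail bounds -/

lemma prb_eq_expect (P : (Fin n → Fin 2) → Prop) :
    prb P = 𝔼 x, if P x then (1 : ℝ) else 0 := by
  rw [prb, Fintype.expect_eq_sum_div_card, Finset.sum_boole]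
  simp

lemma prb_mono {P Q : (Fin n → Fin 2) → Prop} (h : ∀ x, P x → Q x) : prb P ≤ prb Q := by
  rw [prb_eq_expect, prb_eq_expect]
  refine Finset.expect_le_expect fun x _ => ?_
  by_cases hP : P x <;> by_cases hQ : Q x <;> simp_all

lemma prb_le_exp_mul_expect_exp (u : (Fin n → Fin 2) → ℝ) (a : ℝ) {l : ℝ} (hl : 0 ≤ l) :
    prb (fun x => a ≤ u x) ≤ exp (-(l * a)) * 𝔼 x, exp (l * u x) := by
  rw [prb_eq_expect, Finset.mul_expect]
  refine Finset.expect_le_expect fun x _ => ?_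
  rw [← exp_add]
  split_ifs with hx
  · exact one_le_exp (by nlinarith)
  · exact (exp_pos _).le

lemma half_le_prb_of_quant {f : (Fin n → Fin 2) → ℝ} {M : ℝ} (hq : quant f (1 / 2) = M) :
    1 / 2 ≤ prb (fun x => f x ≤ M + 1) := by
  subst hq
  obtain ⟨z, hz⟩ := (Set.finite_range f).bddAbove
  have hfz : ∀ x, f x ≤ z := fun x => hz ⟨x, rfl⟩
  have hne : {z : ℝ | 1 / 2 ≤ prb fun x => f x ≤ z}.Nonempty := ⟨z, by
    show 1 / 2 ≤ prb _
    norm_num [prb_eq_expect, hfz]⟩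
  obtain ⟨z, hzS, hzM⟩ := exists_lt_of_csInf_lt hne (lt_add_one (quant f (1 / 2)))
  exact hzS.trans (prb_mono fun x hx => hx.trans hzM.le)

lemma upperGrad_min_le (g : (Fin n → Fin 2) → ℝ) (a : ℝ) (x : Fin n → Fin 2) :
    upperGrad (fun x => min (g x) a) x ≤ upperGrad g x := by
  refine Finset.sum_le_sum fun i _ =>
    pow_le_pow_left₀ (le_max_right _ _) (max_le ?_ (le_max_right _ _)) 2
  simp only [min_def, max_def]
  split_ifs <;> linarith

theorem prb_le_exp_of_upperGrad_le {g : (Fin n → Fin 2) → ℝ} {v : ℝ} (hv : 0 < v)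
    (hg : ∀ x, upperGrad g x ≤ v) {m a : ℝ} (hmed : 1 / 2 ≤ prb fun x => g x ≤ m)
    (hma : m ≤ a) :
    prb (fun x => a ≤ g x) ≤ exp (-(a - m) ^ 2 / (8 * v)) := by
  -- Truncating at `a` keeps the tail event and pulls the mean down to `(a + m) / 2`.
  set g' : (Fin n → Fin 2) → ℝ := fun x => min (g x) a
  have hmean : 𝔼 x, g' x ≤ (a + m) / 2 := by
    have hpt : ∀ x, g' x ≤ a - (a - m) * if g x ≤ m then 1 else 0 := by
      intro x
      split_ifs with hx
      · linarith [min_le_left (g x) a]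
      · linarith [min_le_right (g x) a]
    have := Finset.expect_le_expect (s := Finset.univ) fun x _ => hpt x
    rw [Finset.expect_sub_distrib, Finset.expect_const Finset.univ_nonempty,
      ← Finset.mul_expect, ← prb_eq_expect] at this
    nlinarith
  set l := (a - m) / (2 * v)
  have hl : 0 ≤ l := div_nonneg (sub_nonneg.2 hma) (by positivity)
  have hevent : (prb fun x => a ≤ g x) = prb fun x => a ≤ g' x := by
    simp [g']
  calc prb (fun x => a ≤ g x)
      ≤ exp (-(l * a)) * 𝔼 x, exp (l * g' x) := hevent ▸ prb_le_exp_mul_expect_exp g' a hl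
    _ ≤ exp (-(l * a)) * exp (l * ((a + m) / 2) + l ^ 2 * v / 2) := by
        gcongr
        refine (expect_exp_mul_le (fun x => (upperGrad_min_le g a x).trans (hg x)) hl).trans ?_
        gcongr
    _ = exp (-(a - m) ^ 2 / (8 * v)) := by
        rw [← exp_add]
        congr 1
        simp only [l]
        field_simp
        ring

/-! ### Reduction to a bounded gradient -/

lemma posPart_sub_comp_max_le {ψ L : ℝ → ℝ} {B u u' : ℝ}
    (hψ : MonotoneOn ψ (Set.Ici (2 * B)))
    (hslope : ∀ u w, 2 * B ≤ w → w ≤ u → u ≤ 2 * w → ψ u - ψ w ≤ L u * (u - w))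
    (hL : 0 ≤ L u) (hu : 2 * B < u) (huu' : |u - u'| ≤ B) :
    max (ψ (max u (2 * B)) - ψ (max u' (2 * B))) 0 ≤ L u * max (u - u') 0 := by
  set w := max u' (2 * B)
  have hw : 2 * B ≤ w := le_max_right _ _
  rw [max_eq_left hu.le]
  refine max_le ?_ (by positivity)
  rcases le_total u w with huw | hwu
  · linarith [hψ (Set.mem_Ici.2 hu.le) hw huw, mul_nonneg hL (le_max_right (u - u') 0)]
  · have hu'w : u' ≤ w := le_max_left _ _
    have := (abs_le.1 huu').2
    calc ψ u - ψ w ≤ L u * (u - w) := hslope u w hw hwu (by linarith)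
      _ ≤ L u * max (u - u') 0 := by gcongr; exact le_max_of_le_left (by linarith)

lemma upperGrad_comp_max_le {f : (Fin n → Fin 2) → ℝ} {B v : ℝ} {φ ψ L : ℝ → ℝ}
    (hB : ∀ x i, |f x - f (flipBit x i)| ≤ B) (hf : ∀ x, upperGrad f x ≤ φ (f x))
    (hψ : MonotoneOn ψ (Set.Ici (2 * B)))
    (hslope : ∀ u w, 2 * B ≤ w → w ≤ u → u ≤ 2 * w → ψ u - ψ w ≤ L u * (u - w))
    (hL : ∀ u, 2 * B < u → 0 ≤ L u ∧ L u ^ 2 * φ u ≤ v) (hv : 0 ≤ v) (x : Fin n → Fin 2) :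
    upperGrad (fun x => ψ (max (f x) (2 * B))) x ≤ v := by
  by_cases hx : f x ≤ 2 * B
  · have hzero : ∀ i,
        max (ψ (max (f x) (2 * B)) - ψ (max (f (flipBit x i)) (2 * B))) 0 = 0 := by
      intro i
      rw [max_eq_right hx]
      exact max_eq_right (sub_nonpos.2 (hψ (Set.mem_Ici.2 le_rfl)
        (Set.mem_Ici.2 (le_max_right _ _)) (le_max_right _ _)))
    simp [upperGrad, hzero, hv]
  · rw [not_le] at hx
    obtain ⟨hL0, hLφ⟩ := hL (f x) hx
    calc upperGrad (fun x => ψ (max (f x) (2 * B))) x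
        ≤ ∑ i, (L (f x) * max (f x - f (flipBit x i)) 0) ^ 2 :=
          Finset.sum_le_sum fun i _ => pow_le_pow_left₀ (le_max_right _ _)
            (posPart_sub_comp_max_le hψ hslope hL0 hx (hB x i)) 2
      _ = L (f x) ^ 2 * upperGrad f x := by simp only [upperGrad, mul_pow, Finset.mul_sum]
      _ ≤ L (f x) ^ 2 * φ (f x) := by gcongr; exact hf x
      _ ≤ v := hLφ

theorem prb_le_exp_of_comp_max {f : (Fin n → Fin 2) → ℝ} {B v M t : ℝ} {φ ψ L : ℝ → ℝ}
    (hB : ∀ x i, |f x - f (flipBit x i)| ≤ B) (hf : ∀ x, upperGrad f x ≤ φ (f x))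
    (hψ : MonotoneOn ψ (Set.Ici (2 * B)))
    (hslope : ∀ u w, 2 * B ≤ w → w ≤ u → u ≤ 2 * w → ψ u - ψ w ≤ L u * (u - w))
    (hL : ∀ u, 2 * B < u → 0 ≤ L u ∧ L u ^ 2 * φ u ≤ v) (hv : 0 < v)
    (hq : quant f (1 / 2) = M) (ht : 2 * B ≤ t)
    (hψt : 2 * |ψ (max (M + 1) (2 * B))| ≤ ψ t) :
    prb (fun x => t ≤ f x) ≤ exp (-ψ t ^ 2 / (32 * v)) := by
  set m := ψ (max (M + 1) (2 * B))
  have hmax : ∀ a, max a (2 * B) ∈ Set.Ici (2 * B) := fun a => le_max_right a _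
  have hmed : 1 / 2 ≤ prb fun x => ψ (max (f x) (2 * B)) ≤ m :=
    (half_le_prb_of_quant hq).trans
      (prb_mono fun x hx => hψ (hmax _) (hmax _) (max_le_max hx le_rfl))
  have hm : m ≤ ψ t / 2 := by linarith [le_abs_self m]
  calc prb (fun x => t ≤ f x) ≤ prb fun x => ψ t ≤ ψ (max (f x) (2 * B)) :=
        prb_mono fun x hx => hψ ht (hmax _) (hx.trans (le_max_left _ _))
    _ ≤ exp (-(ψ t - m) ^ 2 / (8 * v)) :=
        prb_le_exp_of_upperGrad_le hv (upperGrad_comp_max_le hB hf hψ hslope hL hv.le) hmed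
          (by linarith [abs_nonneg m])
    _ ≤ exp (-ψ t ^ 2 / (32 * v)) := by
        have hsq : (ψ t / 2) ^ 2 ≤ (ψ t - m) ^ 2 :=
          pow_le_pow_left₀ (by linarith [abs_nonneg m]) (by linarith) 2
        rw [exp_le_exp, neg_div, neg_div, neg_le_neg_iff, div_le_div_iff₀ (by positivity)
          (by positivity)]
        nlinarith

lemma log_sub_log_le {u w : ℝ} (hw : 0 < w) (hwu : w ≤ u) (hu : u ≤ 2 * w) :
    log u - log w ≤ 2 / u * (u - w) := by
  have hlog := log_le_sub_one_of_pos (div_pos (hw.trans_le hwu) hw)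
  rw [log_div (hw.trans_le hwu).ne' hw.ne'] at hlog
  refine hlog.trans ?_
  rw [div_sub_one hw.ne', div_le_iff₀ hw,
    show 2 / u * (u - w) * w = (u - w) * (2 * w / u) by ring]
  exact le_mul_of_one_le_right (sub_nonneg.2 hwu) ((one_le_div (by linarith)).2 hu)

lemma rpow_sub_rpow_le {β u w : ℝ} (hβ0 : 0 < β) (hβ1 : β ≤ 1) (hw : 0 < w) (hwu : w ≤ u)
    (hu : u ≤ 2 * w) : u ^ β - w ^ β ≤ β * (u / 2) ^ (β - 1) * (u - w) := by
  have hbern := rpow_one_add_le_one_add_mul_self (s := u / w - 1)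
    (by linarith [(one_le_div hw).2 hwu]) hβ0.le hβ1
  rw [add_sub_cancel, div_rpow (hw.trans_le hwu).le hw.le, div_le_iff₀ (rpow_pos_of_pos hw β)]
    at hbern
  have htangent : u ^ β - w ^ β ≤ β * w ^ (β - 1) * (u - w) := by
    rw [rpow_sub hw, rpow_one]
    have : (1 + β * (u / w - 1)) * w ^ β = w ^ β + β * (w ^ β / w) * (u - w) := by
      field_simp
    linarith
  refine htangent.trans ?_
  gcongr β * ?_ * (u - w)
  exact rpow_le_rpow_of_nonpos (by linarith) (by linarith) (by linarith)

theorem prb_le_exp_neg_log_sq {c B M : ℝ} (hc : 0 < c) (hB : 0 < B)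
    {f : (Fin n → Fin 2) → ℝ} (hBd : ∀ x i, |f x - f (flipBit x i)| ≤ B)
    (hf : ∀ x, upperGrad f x ≤ c * max (f x) 0 ^ (2 : ℝ)) (hq : quant f (1 / 2) = M) {t : ℝ}
    (ht : 2 * B ≤ t) (htm : exp (2 * |log (max (M + 1) (2 * B))|) ≤ t) :
    prb (fun x => t ≤ f x) ≤ exp (-log t ^ 2 / (32 * (4 * c))) := by
  refine prb_le_exp_of_comp_max (φ := fun u => c * max u 0 ^ (2 : ℝ)) (L := fun u => 2 / u)
    hBd hf (fun a ha b _ hab => log_le_log (by simp at ha; linarith) hab)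
    (fun u w hw hwu hu => log_sub_log_le (by linarith) hwu hu)
    (fun u hu => ⟨div_nonneg zero_le_two (by linarith), ?_⟩)
    (by positivity) hq ht ((le_log_iff_exp_le (by linarith)).2 htm)
  have hu0 : 0 < u := by linarith
  rw [max_eq_left hu0.le, rpow_two]
  field_simp
  norm_num

theorem prb_le_exp_neg_rpow {c B M α : ℝ} (hc : 0 < c) (hB : 0 < B) (hα0 : 0 ≤ α)
    (hα2 : α < 2) {f : (Fin n → Fin 2) → ℝ} (hBd : ∀ x i, |f x - f (flipBit x i)| ≤ B)
    (hf : ∀ x, upperGrad f x ≤ c * max (f x) 0 ^ α) (hq : quant f (1 / 2) = M) {t : ℝ}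
    (ht : 2 * B ≤ t)
    (htm : (2 * |max (M + 1) (2 * B) ^ ((2 - α) / 2)|) ^ ((2 - α) / 2)⁻¹ ≤ t) :
    prb (fun x => t ≤ f x) ≤ exp (-t ^ (2 - α) / (32 * (4 * c))) := by
  set β := (2 - α) / 2
  have hβ0 : 0 < β := by simp only [β]; linarith
  have hβ1 : β ≤ 1 := by simp only [β]; linarith
  have hL : ∀ u, 2 * B < u →
      (β * (u / 2) ^ (β - 1)) ^ 2 * (c * max u 0 ^ α) ≤ 4 * c := by
    intro u hu
    have hu0 : 0 < u := by linarith
    have : ((u / 2) ^ (β - 1)) ^ 2 * u ^ α = 2 ^ α := by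
      rw [← rpow_natCast, ← rpow_mul (by positivity), div_rpow hu0.le zero_le_two,
        show (β - 1) * ((2 : ℕ) : ℝ) = -α by simp only [β]; push_cast; ring, rpow_neg hu0.le,
        rpow_neg zero_le_two]
      field_simp
    have h2α : (2 : ℝ) ^ α ≤ 4 := by
      calc (2 : ℝ) ^ α ≤ 2 ^ (2 : ℝ) := rpow_le_rpow_of_exponent_le one_le_two hα2.le
        _ = 4 := by norm_num
    rw [max_eq_left hu0.le]
    calc (β * (u / 2) ^ (β - 1)) ^ 2 * (c * u ^ α) = β ^ 2 * c * 2 ^ α := by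
          rw [← this]; ring
      _ ≤ 1 * c * 4 := by gcongr; nlinarith
      _ = 4 * c := by ring
  have hψt : 2 * |max (M + 1) (2 * B) ^ β| ≤ t ^ β := by
    rw [← rpow_inv_rpow (by positivity) hβ0.ne' (x := 2 * |_|)]
    exact rpow_le_rpow (by positivity) htm hβ0.le
  have hsq : (t ^ β) ^ 2 = t ^ (2 - α) := by
    rw [← rpow_natCast, ← rpow_mul (by linarith)]
    congr 1
    simp only [β]
    push_cast
    ring
  rw [← hsq]
  refine prb_le_exp_of_comp_max (φ := fun u => c * max u 0 ^ α) (ψ := fun u => u ^ β)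
    (L := fun u => β * (u / 2) ^ (β - 1)) hBd hf
    (fun a ha b _ hab => rpow_le_rpow (by simp at ha; linarith) hab hβ0.le)
    (fun u w hw hwu hu => rpow_sub_rpow_le hβ0 hβ1 (by linarith) hwu hu)
    (fun u hu => ⟨mul_nonneg hβ0.le (rpow_nonneg (by linarith) _), hL u hu⟩)
    (by positivity) hq ht hψt

lemma exp_neg_div_le_mul_exp_neg_div {c X : ℝ} (hc : 0 < c) (hX : 0 ≤ X) :
    exp (-X / (32 * (4 * c))) ≤ (128 * c + 1) * exp (-X / (128 * c + 1)) := by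
  calc exp (-X / (32 * (4 * c))) ≤ exp (-X / (128 * c + 1)) := by
        rw [exp_le_exp, neg_div, neg_div, neg_le_neg_iff]
        exact div_le_div_of_nonneg_left hX (by positivity) (by linarith)
    _ ≤ (128 * c + 1) * exp (-X / (128 * c + 1)) :=
        le_mul_of_one_le_left (exp_pos _).le (by linarith)

end BooleanCube

theorem stmt_10 (c : ℝ) (hc : 0 < c) (α : ℝ) (hα : α ∈ Set.Icc (0 : ℝ) 2)
    (B M : ℝ) (hBpos : 0 < B) :
    ∃ C > (0 : ℝ), ∃ t₀ > (0 : ℝ),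
      ∀ (n : ℕ) (f : (Fin n → Fin 2) → ℝ),
        (∀ x i, |f x - f (flipBit x i)| ≤ B) →
        (∀ x, ∑ i, (max (f x - f (flipBit x i)) 0) ^ 2 ≤ c * max (f x) 0 ^ α) →
        quant f (1 / 2) = M →
        ∀ t : ℝ, t₀ ≤ t →
          (α < 2 → (prb fun x => t ≤ f x) ≤ C * Real.exp (-(t ^ (2 - α)) / C)) ∧
          (α = 2 → (prb fun x => t ≤ f x) ≤ C * Real.exp (-(Real.log t) ^ 2 / C)) := by
  obtain ⟨hα0, hα2⟩ := hα
  refine ⟨128 * c + 1, by positivity, ?_⟩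
  rcases hα2.lt_or_eq with hlt | rfl
  · refine ⟨max (2 * B) ((2 * |max (M + 1) (2 * B) ^ ((2 - α) / 2)|) ^ ((2 - α) / 2)⁻¹),
      lt_max_of_lt_left (by linarith), fun n f hBd hf hq t ht => ⟨fun _ => ?_, fun h => ?_⟩⟩
    · have ht0 : 2 * B ≤ t := le_of_max_le_left ht
      exact (BooleanCube.prb_le_exp_neg_rpow hc hBpos hα0 hlt hBd hf hq ht0
        (le_of_max_le_right ht)).trans
        (BooleanCube.exp_neg_div_le_mul_exp_neg_div hc (rpow_nonneg (by linarith) _))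
    · exact absurd h hlt.ne
  · refine ⟨max (2 * B) (Real.exp (2 * |Real.log (max (M + 1) (2 * B))|)),
      lt_max_of_lt_left (by linarith), fun n f hBd hf hq t ht => ⟨fun h => ?_, fun _ => ?_⟩⟩
    · exact absurd h (lt_irrefl 2)
    · exact (BooleanCube.prb_le_exp_neg_log_sq hc hBpos hBd hf hq (le_of_max_le_left ht)
        (le_of_max_le_right ht)).trans
        (BooleanCube.exp_neg_div_le_mul_exp_neg_div hc (sq_nonneg _))
end

section
/- Let f : {0,1}ⁿ → ℝ, let X be uniformly distributed on {0,1}ⁿ, and let a, b be real numbers with b > a ≥ Mf (the median of f(X)). Define g_{a,b} : {0,1}ⁿ → ℝ by g_{a,b}(x) = b if f(x) ≥ b, g_{a,b}(x) = f(x) if a < f(x) < b, and g_{a,b}(x) = a if f(x) ≤ a. Then Var(g_{a,b}(X)) ≥ (P{f(X) ≥ b}/4)·(b − a)². -/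
open scoped Classical
open Finset

/-! Let `p = P{f ≥ b}` and `m` the mean of `g`. Since `Mf ≤ a`, `P{f ≤ a} ≥ 1/2`, and as the events
`{f ≥ b}` and `{f ≤ a}` are disjoint, `p ≤ P{f ≤ a}`. On `{f ≥ b}` we have `g = b`, on `{f ≤ a}` we
have `g = a`, and `m` is at distance at least `(b - a)/2` from one of `a`, `b`; the event on which
`g` equals that value has probability at least `p`, which gives `Var g ≥ p ((b - a)/2)²`. -/

lemma prb_mono {n : ℕ} {P Q : (Fin n → Fin 2) → Prop} (h : ∀ x, P x → Q x) :
    prb P ≤ prb Q := by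
  unfold prb
  gcongr with x
  exact h x

lemma prb_of_forall {n : ℕ} {P : (Fin n → Fin 2) → Prop} (h : ∀ x, P x) : prb P = 1 := by
  rw [prb, filter_true_of_mem fun x _ => h x, card_univ, Fintype.card_fun, Fintype.card_fin,
    Fintype.card_fin]
  push_cast
  exact div_self (by positivity)

lemma prb_add_prb_le_one {n : ℕ} {P Q : (Fin n → Fin 2) → Prop} (h : ∀ x, P x → ¬ Q x) :
    prb P + prb Q ≤ 1 := by
  have hdisj : Disjoint (univ.filter P) (univ.filter Q) :=
    disjoint_filter.2 fun x _ => h x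
  have hcard := card_le_univ (univ.filter P ∪ univ.filter Q)
  rw [card_union_of_disjoint hdisj, Fintype.card_fun, Fintype.card_fin, Fintype.card_fin] at hcard
  rw [prb, prb, ← add_div, div_le_one (by positivity)]
  exact_mod_cast hcard

lemma exists_gt_forall_lt_imp_le {α : Type*} [Fintype α] (f : α → ℝ) (a : ℝ) :
    ∃ t, a < t ∧ ∀ x, f x < t → f x ≤ a := by
  let F := insert (a + 1) ((univ.image f).filter (a < ·))
  have hF : F.Nonempty := insert_nonempty _ _
  refine ⟨F.min' hF, (lt_min'_iff F hF).2 fun y hy => ?_, fun x hx => ?_⟩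
  · rcases mem_insert.1 hy with rfl | hy
    · exact lt_add_one a
    · exact (mem_filter.1 hy).2
  · by_contra! hxa
    have hxF : f x ∈ F := mem_insert_of_mem (mem_filter.2 ⟨mem_image_of_mem f (mem_univ x), hxa⟩)
    exact (min'_le F _ hxF).not_gt hx

lemma half_le_prb_le_of_quant_le {n : ℕ} (f : (Fin n → Fin 2) → ℝ) {a : ℝ}
    (ha : quant f (1 / 2) ≤ a) : 1 / 2 ≤ prb fun x => f x ≤ a := by
  by_contra! hlt
  obtain ⟨t, hat, hgap⟩ := exists_gt_forall_lt_imp_le f a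
  have hne : {z : ℝ | 1 / 2 ≤ prb fun x => f x ≤ z}.Nonempty := by
    obtain ⟨M, hM⟩ := Finite.bddAbove_range f
    refine ⟨M, ?_⟩
    rw [Set.mem_ofPred_eq, prb_of_forall fun x => hM (Set.mem_range_self x)]
    norm_num
  have htq : t ≤ quant f (1 / 2) := by
    refine le_csInf hne fun z hz => ?_
    by_contra! hzt
    have : (prb fun x => f x ≤ z) ≤ prb fun x => f x ≤ a :=
      prb_mono fun x hx => hgap x (hx.trans_lt hzt)
    exact (lt_irrefl _) ((hz.trans this).trans_lt hlt)
  linarith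

lemma prb_mul_le_expecb {n : ℕ} {h : (Fin n → Fin 2) → ℝ} {P : (Fin n → Fin 2) → Prop} {c : ℝ}
    (h0 : ∀ x, 0 ≤ h x) (hc : ∀ x, P x → c ≤ h x) : prb P * c ≤ expecb h := by
  rw [prb, expecb, div_mul_eq_mul_div]
  gcongr
  calc ((univ.filter P).card : ℝ) * c = ∑ _x ∈ univ.filter P, c := by
        rw [sum_const, nsmul_eq_mul]
    _ ≤ ∑ x ∈ univ.filter P, h x := sum_le_sum fun x hx => hc x (mem_filter.1 hx).2
    _ ≤ ∑ x, h x := sum_le_sum_of_subset_of_nonneg (filter_subset _ _) fun x _ _ => h0 x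

theorem stmt_18 {n : ℕ} (f : (Fin n → Fin 2) → ℝ)
    (a b : ℝ) (hab : a < b) (ha : quant f (1 / 2) ≤ a)
    (g : (Fin n → Fin 2) → ℝ)
    (hg : ∀ x, g x = if b ≤ f x then b else if f x ≤ a then a else f x) :
    (prb fun x => b ≤ f x) / 4 * (b - a) ^ 2 ≤ varb g := by
  have hq : 1 / 2 ≤ prb fun x => f x ≤ a := half_le_prb_le_of_quant_le f ha
  have hpq : (prb fun x => b ≤ f x) ≤ prb fun x => f x ≤ a := by
    have := prb_add_prb_le_one (P := fun x => b ≤ f x) (Q := fun x => f x ≤ a)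
      fun x hb hfa => by linarith
    linarith
  suffices (prb fun x => b ≤ f x) * ((b - a) / 2) ^ 2 ≤ varb g by linarith
  set m := expecb g
  rcases le_total m ((a + b) / 2) with hm | hm
  · refine prb_mul_le_expecb (fun x => sq_nonneg _) fun x hx => ?_
    rw [hg x, if_pos hx]
    gcongr
    linarith
  · calc (prb fun x => b ≤ f x) * ((b - a) / 2) ^ 2
        ≤ (prb fun x => f x ≤ a) * ((b - a) / 2) ^ 2 := by gcongr
      _ ≤ varb g := by
        refine prb_mul_le_expecb (fun x => sq_nonneg _) fun x hx => ?_
        rw [hg x, if_neg (by linarith), if_pos hx, sub_sq_comm]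
        gcongr
        linarith
end

section
/- Let A be a nonempty compact subset of ℝⁿ consisting of vectors α with Euclidean norm ‖α‖ ≤ 1, and define f : {0,1}ⁿ → ℝ by f(x) = sup_{α ∈ A} Σ_{i=1}^n αᵢ·(xᵢ − 1/2). Then f satisfies condition (2.1) with v = 1, that is, Σ_{i=1}^n (f(x) − f(x^{(i)}))₊² ≤ 1 for all x ∈ {0,1}ⁿ. -/
open scoped Classical
open Finset

/-! The supremum defining `f x` is attained at some `α ∈ A` by compactness. Since `α` is a
competitor in the supremum defining `f (x^{(i)})`, and flipping bit `i` changes the linear form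
of `α` by `±αᵢ`, we get `(f x - f x^{(i)})₊ ≤ |αᵢ|`; summing squares gives `‖α‖² ≤ 1`. -/

noncomputable def centeredDot {n : ℕ} (α : Fin n → ℝ) (x : Fin n → Fin 2) : ℝ :=
  ∑ i, α i * (((x i : ℕ) : ℝ) - 1 / 2)

theorem centeredDot_sub_flipBit_le_abs {n : ℕ} (α : Fin n → ℝ) (x : Fin n → Fin 2) (i : Fin n) :
    centeredDot α x - centeredDot α (flipBit x i) ≤ |α i| := by
  have hsub : centeredDot α x - centeredDot α (flipBit x i) =
      α i * (((x i : ℕ) : ℝ) - ((x i + 1 : Fin 2) : ℕ)) := by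
    rw [centeredDot, centeredDot, ← Finset.sum_sub_distrib, Finset.sum_eq_single i]
    · simp only [flipBit, Function.update_self]
      ring
    · intro j _ hj
      simp [flipBit, Function.update_of_ne hj]
    · simp
  rw [hsub]
  obtain hx | hx : x i = 0 ∨ x i = 1 := by omega
  all_goals rw [hx]
  · simpa using neg_le_abs (α i)
  · simpa using le_abs_self (α i)

theorem exists_mem_sSup_image_sub_sSup_image_le {X ι : Type*} [TopologicalSpace X]
    {A : Set X} (hA : A.Nonempty) (hAc : IsCompact A) {g : X → ι → ℝ}
    (hg : ∀ y, Continuous (g · y)) (x : ι) :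
    ∃ α ∈ A, ∀ y, sSup ((g · x) '' A) - sSup ((g · y) '' A) ≤ g α x - g α y := by
  obtain ⟨α, hαA, hαmax⟩ := hAc.exists_sSup_image_eq hA (hg x).continuousOn
  refine ⟨α, hαA, fun y => ?_⟩
  have hle : g α y ≤ sSup ((g · y) '' A) :=
    le_csSup (hAc.image (hg y)).bddAbove ⟨α, hαA, rfl⟩
  rw [hαmax]
  linarith

theorem sum_sq_max_zero_le_sum_sq {ι : Type*} (s : Finset ι) {a b : ι → ℝ}
    (h : ∀ i ∈ s, a i ≤ |b i|) : ∑ i ∈ s, max (a i) 0 ^ 2 ≤ ∑ i ∈ s, b i ^ 2 := by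
  refine Finset.sum_le_sum fun i hi => ?_
  rw [← sq_abs (b i)]
  exact pow_le_pow_left₀ (le_max_right _ _) (max_le (h i hi) (abs_nonneg _)) 2

theorem stmt_19 {n : ℕ} (A : Set (Fin n → ℝ)) (hA : A.Nonempty) (hAc : IsCompact A)
    (hnorm : ∀ α ∈ A, Real.sqrt (∑ i, α i ^ 2) ≤ 1)
    (f : (Fin n → Fin 2) → ℝ)
    (hf : ∀ x, f x = sSup ((fun α : Fin n → ℝ =>
      ∑ i, α i * (((x i : ℕ) : ℝ) - 1 / 2)) '' A)) :
    ∀ x, ∑ i, (max (f x - f (flipBit x i)) 0) ^ 2 ≤ 1 := by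
  intro x
  have hcont : ∀ y : Fin n → Fin 2, Continuous (centeredDot · y) := fun y =>
    continuous_finsetSum _ fun i _ => (continuous_apply i).mul continuous_const
  obtain ⟨α, hαA, hα⟩ := exists_mem_sSup_image_sub_sSup_image_le hA hAc hcont x
  have hdiff : ∀ i ∈ univ, f x - f (flipBit x i) ≤ |α i| := fun i _ => by
    rw [hf, hf]
    exact (hα _).trans (centeredDot_sub_flipBit_le_abs α x i)
  have hα1 : ∑ i, α i ^ 2 ≤ 1 := by
    simpa using (Real.sqrt_le_left zero_le_one).mp (hnorm α hαA)
  exact (sum_sq_max_zero_le_sum_sq univ hdiff).trans hα1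
end
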